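/- Let Λ be a commutative ring, let E be a free Λ-module of finite rank, and let q : E → Λ be a quadratic form. Then the canonical Λ-linear map ι : E → C(E,q) into the Clifford algebra C(E,q) is injective, and its image ι(E) is a direct summand of C(E,q) as a Λ-module, i.e., there exists a Λ-submodule W of C(E,q) with C(E,q) = ι(E) ⊕ W. -/

import Mathlib

/-!
Over a free module every quadratic form is `x ↦ B x x` for some bilinear form `B`. Changing the
form by `-B` is a linear map from `C(E,q)` to `C(E,0)`, the exterior algebra, which sends `ι_q x`
to `ι_0 x`; followed by the degree-one projection of the exterior algebra it is a linear
retraction of `ι_q`. A linear map with a retraction is injective, and its range is complemented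
by the kernel of the retraction.
-/

namespace LinearMap

theorem isCompl_range_ker_of_leftInverse {R M N : Type*} [Ring R] [AddCommGroup M] [Module R M]
    [AddCommGroup N] [Module R N] {f : M →ₗ[R] N} {g : N →ₗ[R] M}
    (h : Function.LeftInverse g f) : IsCompl (range f) (ker g) := by
  have hgf : g ∘ₗ f = id := LinearMap.ext h
  have hidem : IsIdempotentElem (f ∘ₗ g) := by
    change f ∘ₗ (g ∘ₗ f) ∘ₗ g = f ∘ₗ g
    rw [hgf, id_comp]
  have hrange : range (f ∘ₗ g) = range f :=
    range_comp_of_range_eq_top f (range_eq_top.mpr h.surjective)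
  have hker : ker (f ∘ₗ g) = ker g := ker_comp_of_ker_eq_bot g (ker_eq_bot.mpr h.injective)
  rw [← hrange, ← hker]
  exact IsIdempotentElem.isCompl hidem

end LinearMap

namespace CliffordAlgebra

variable {R M : Type*} [CommRing R] [AddCommGroup M] [Module R M]

theorem exists_leftInverse_ι_of_toQuadraticMap_eq {Q : QuadraticForm R M}
    {B : LinearMap.BilinForm R M} (hB : B.toQuadraticMap = Q) :
    ∃ r : CliffordAlgebra Q →ₗ[R] M, Function.LeftInverse r (ι Q) := by
  have h : (-B).toQuadraticMap = 0 - Q := by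
    rw [LinearMap.BilinMap.toQuadraticMap_neg, hB, zero_sub]
  refine ⟨ExteriorAlgebra.ιInv ∘ₗ changeForm h, fun m => ?_⟩
  rw [LinearMap.comp_apply, changeForm_ι]
  exact ExteriorAlgebra.ι_leftInverse m

theorem exists_leftInverse_ι [Module.Free R M] (Q : QuadraticForm R M) :
    ∃ r : CliffordAlgebra Q →ₗ[R] M, Function.LeftInverse r (ι Q) :=
  let ⟨_, hB⟩ := LinearMap.BilinMap.toQuadraticMap_surjective Q
  exists_leftInverse_ι_of_toQuadraticMap_eq hB

end CliffordAlgebra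

theorem cliffordAlgebra_iota_injective_and_image_direct_summand_general
    (Λ : Type*) [CommRing Λ] (E : Type*) [AddCommGroup E] [Module Λ E]
    [Module.Free Λ E] (q : QuadraticForm Λ E) :
    Function.Injective (CliffordAlgebra.ι q) ∧
      ∃ W : Submodule Λ (CliffordAlgebra q),
        IsCompl (LinearMap.range (CliffordAlgebra.ι q)) W := by
  obtain ⟨r, hr⟩ := CliffordAlgebra.exists_leftInverse_ι q
  exact ⟨hr.injective, _, LinearMap.isCompl_range_ker_of_leftInverse hr⟩

/-- Let `Λ` be a commutative ring, `E` a free `Λ`-module of finite rank and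
`q : E → Λ` a quadratic form. Then the canonical map `ι : E → C(E,q)` into the
Clifford algebra is injective and its image is a direct summand of `C(E,q)` as a
`Λ`-module. -/
theorem cliffordAlgebra_iota_injective_and_image_direct_summand
    (Λ : Type*) [CommRing Λ] (E : Type*) [AddCommGroup E] [Module Λ E]
    [Module.Free Λ E] [Module.Finite Λ E] (q : QuadraticForm Λ E) :
    Function.Injective (CliffordAlgebra.ι q) ∧
      ∃ W : Submodule Λ (CliffordAlgebra q),
        IsCompl (LinearMap.range (CliffordAlgebra.ι q)) W :=
  cliffordAlgebra_iota_injective_and_image_direct_summand_general Λ E q
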